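/- arXiv:2505.06952 — 4 statements merged into one kernel-verified Lean document; each statement's English description precedes it below -/
import Mathlib

section
/- Fix γ > 0. There exists a constant C > 0 such that for every φ ∈ H^{3/4}[0,1] and every v ∈ {0,1}: ∫₀^∞ Φ_v(ϱ;φ)² dϱ ≤ C·Σ_{ℓ≥1}(πℓ)^{3/2} φ̂_c(ℓ)², where Φ_v(ϱ;φ) := Σ_{ℓ≥1} c_ℓ(v)·φ̂_c(ℓ)·(πℓ)²/((πℓ)² + γ²ϱ⁴). -/
open MeasureTheory Real Filter
open scoped ContDiff ENNReal

noncomputable section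

/-- Lebesgue measure restricted to `[0,1]`. -/
def μ01 : Measure ℝ := volume.restrict (Set.Icc (0:ℝ) 1)

/-- The cosine orthonormal system `c_ℓ` on `[0,1]`:
`c_0 ≡ 1`, `c_ℓ(u) = √2 cos(πℓu)` for `ℓ ≥ 1`. -/
def cosB (ℓ : ℕ) (u : ℝ) : ℝ :=
  if ℓ = 0 then 1 else Real.sqrt 2 * Real.cos (Real.pi * ℓ * u)

/-- The cosine coefficients `φ̂_c(ℓ) = ∫₀¹ φ(u) c_ℓ(u) du`. -/
def cosCoeff (φ : ℝ → ℝ) (ℓ : ℕ) : ℝ := ∫ u in Set.Icc (0:ℝ) 1, φ u * cosB ℓ u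

/-- The kernel `V_ϱ(u,v) = ϱ ∑_{n ≥ 0} c_n(u) c_n(v) / (ϱ + (nπ)²)`. -/
def Vker (ϱ u v : ℝ) : ℝ := ϱ * ∑' n : ℕ, cosB n u * cosB n v / (ϱ + ((n : ℝ) * Real.pi) ^ 2)

/-- The boundary pairing `∫₀¹ V_ϱ(u,v) (Tv − T(s,u)) du`. -/
def bTerm (T : ℝ → ℝ → ℝ) (Tv v s ϱ : ℝ) : ℝ :=
  ∫ u in Set.Icc (0:ℝ) 1, Vker ϱ u v * (Tv - T s u)

/-- A weak solution of the fractional heat equation with thermostatted boundary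
with data `(cbulk, cbd, T0, T1, Tini)`. -/
structure IsWeakSolution (cbulk cbd T0 T1 : ℝ) (Tini : ℝ → ℝ) (T : ℝ → ℝ → ℝ) : Prop where
  /-- `T(t) ∈ L²[0,1]` for every `t ≥ 0`. -/
  memL2 : ∀ t : ℝ, 0 ≤ t → MemLp (T t) 2 μ01
  /-- (i) continuity of `T` into `L²[0,1]` with the weak topology. -/
  weakCont : ∀ g : ℝ → ℝ, MemLp g 2 μ01 →
    ContinuousOn (fun t => ∫ u in Set.Icc (0:ℝ) 1, T t u * g u) (Set.Ici (0:ℝ))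
  /-- (ii) the boundary terms are square integrable against `ϱ^{-3/4} dϱ ds`. -/
  bdryFinite : ∀ v Tv : ℝ, ((v = 0 ∧ Tv = T0) ∨ (v = 1 ∧ Tv = T1)) → ∀ t : ℝ, 0 < t →
    (∫⁻ s in Set.Ioc (0:ℝ) t, ∫⁻ ϱ in Set.Ioi (0:ℝ),
        ENNReal.ofReal ((bTerm T Tv v s ϱ) ^ 2 * ϱ ^ (-(3:ℝ)/4))) < ⊤
  /-- (iii) the weak form of the equation, against smooth test functions
  compactly supported in `(0,1)`. -/
  weakEq : ∀ φ : ℝ → ℝ, ContDiff ℝ ∞ φ → tsupport φ ⊆ Set.Ioo (0:ℝ) 1 → ∀ t : ℝ, 0 ≤ t →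
    (∫ u in Set.Icc (0:ℝ) 1, φ u * T t u) - (∫ u in Set.Icc (0:ℝ) 1, φ u * Tini u)
      = (-cbulk) * (∫ s in Set.Ioc (0:ℝ) t,
            ∑' ℓ : ℕ, (Real.pi * ((ℓ : ℝ) + 1)) ^ ((3:ℝ)/2)
              * cosCoeff φ (ℓ + 1) * cosCoeff (T s) (ℓ + 1))
        + cbd * ((∫ s in Set.Ioc (0:ℝ) t, ∫ ϱ in Set.Ioi (0:ℝ),
              (∫ u in Set.Icc (0:ℝ) 1, Vker ϱ u 0 * φ u) * bTerm T T0 0 s ϱ * ϱ ^ (-(3:ℝ)/4))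
          + (∫ s in Set.Ioc (0:ℝ) t, ∫ ϱ in Set.Ioi (0:ℝ),
              (∫ u in Set.Icc (0:ℝ) 1, Vker ϱ u 1 * φ u) * bTerm T T1 1 s ϱ * ϱ ^ (-(3:ℝ)/4)))

/-- The squared Sobolev seminorm `‖f‖²_{α,0} = ∑_{ℓ≥1} (πℓ)^{2α} f̂_c(ℓ)²`. -/
def seminormSq (α : ℝ) (f : ℝ → ℝ) : ℝ :=
  ∑' ℓ : ℕ, (Real.pi * ((ℓ : ℝ) + 1)) ^ (2 * α) * (cosCoeff f (ℓ + 1)) ^ 2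

/-- Membership in the Sobolev space `H^α[0,1]`. -/
def MemH (α : ℝ) (f : ℝ → ℝ) : Prop :=
  MemLp f 2 μ01 ∧
    Summable (fun ℓ : ℕ => (Real.pi * ((ℓ : ℝ) + 1)) ^ (2 * α) * (cosCoeff f (ℓ + 1)) ^ 2)

/-- The Sobolev norm `‖f‖_α = (‖f‖²_{L²} + ‖f‖²_{α,0})^{1/2}`. -/
def hnorm (α : ℝ) (f : ℝ → ℝ) : ℝ :=
  Real.sqrt (((eLpNorm f 2 μ01).toReal) ^ 2 + seminormSq α f)

/-- Membership in `H₀^α[0,1]`: the closure, in the `‖·‖_α` norm, of the set of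
`C^∞` functions compactly supported in `(0,1)`. -/
def MemH0 (α : ℝ) (f : ℝ → ℝ) : Prop :=
  MemH α f ∧ ∃ g : ℕ → ℝ → ℝ,
    (∀ k, ContDiff ℝ ∞ (g k) ∧ tsupport (g k) ⊆ Set.Ioo (0:ℝ) 1) ∧
    Tendsto (fun k => hnorm α (fun u => g k u - f u)) atTop (nhds 0)

/-- The value at `v` of the continuous representative of `f`, given by the
cosine series `∑_{ℓ≥0} f̂_c(ℓ) c_ℓ(v)`. -/
def reprVal (f : ℝ → ℝ) (v : ℝ) : ℝ := ∑' ℓ : ℕ, cosCoeff f ℓ * cosB ℓ v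

/-!
Write `Φ_v(ϱ) = ∑ b_ℓ K_ℓ(ϱ)` with `b_ℓ = c_ℓ(v) φ̂_c(ℓ)`, so that `b_ℓ² = 2 φ̂_c(ℓ)²`, and
`K_ℓ(ϱ) = p²/(p² + γ²ϱ⁴)`, `p = πℓ`. Cauchy–Schwarz with weights `p^{3/2} w_ℓ(ϱ)` gives
`Φ_v(ϱ)² ≤ (∑ p^{3/2} b_ℓ² w_ℓ(ϱ)) · ∑ K_ℓ(ϱ)² / (p^{3/2} w_ℓ(ϱ))`.
For `w_ℓ(ϱ) = c/(√ϱ (1 + c²ϱ))` with `c = (γ/p)^{1/4}` every `w_ℓ` has mass `π` on `(0, ∞)`, so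
the first factor integrates to `π ∑ p^{3/2} b_ℓ²`. The second factor is bounded uniformly in `ϱ`:
in the scale-free variable `τ = c√ϱ` its `ℓ`-th term is at most
`2 γ^{-3/2} ϱ^{-2} min(1, γϱ²/p)^{5/4}`, and by the integral test
`∑_{n ≥ 1} min(1, x/n)^{5/4} ≤ 5x`, here with `x = γϱ²/π`.
-/

open Set Topology

theorem tsum_sq_le_tsum_mul_tsum_of_sq_le_mul {ι : Type*} {r f g : ι → ℝ}
    (hf : ∀ i, 0 ≤ f i) (hg : ∀ i, 0 ≤ g i) (hfs : Summable f) (hgs : Summable g)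
    (h : ∀ i, r i ^ 2 ≤ f i * g i) : (∑' i, r i) ^ 2 ≤ (∑' i, f i) * ∑' i, g i := by
  have hr : Summable r := by
    refine Summable.of_norm_bounded ((hfs.add hgs).div_const 2) fun i => ?_
    refine abs_le_of_sq_le_sq ?_ (by linarith [hf i, hg i])
    nlinarith [h i, sq_nonneg (f i - g i)]
  exact le_of_tendsto_of_tendsto' (hr.hasSum.pow 2) (Tendsto.mul hfs.hasSum hgs.hasSum)
    fun s => Finset.sum_sq_le_sum_mul_sum_of_sq_le_mul s (fun i _ => hf i) (fun i _ => hg i)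
      fun i _ => h i

theorem sq_tsum_mul_le_of_weight {ι : Type*} {b K ν w : ι → ℝ} {B : ℝ}
    (hν : ∀ i, 0 < ν i) (hw : ∀ i, 0 < w i) (hf : Summable fun i => ν i * b i ^ 2 * w i)
    (hK : Summable fun i => K i ^ 2 / (ν i * w i)) (hKB : ∑' i, K i ^ 2 / (ν i * w i) ≤ B) :
    (∑' i, b i * K i) ^ 2 ≤ B * ∑' i, ν i * b i ^ 2 * w i := by
  have hf_nonneg : ∀ i, 0 ≤ ν i * b i ^ 2 * w i := fun i => by
    have := hν i; have := hw i; positivity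
  have hcs := tsum_sq_le_tsum_mul_tsum_of_sq_le_mul (r := fun i => b i * K i) hf_nonneg
    (fun i => by have := hν i; have := hw i; positivity) hf hK fun i => by
      have := hν i; have := hw i
      exact le_of_eq (by field_simp)
  rw [mul_comm B]
  exact hcs.trans (mul_le_mul_of_nonneg_left hKB (tsum_nonneg hf_nonneg))

theorem lintegral_sq_tsum_mul_le {α ι : Type*} [MeasurableSpace α] [Countable ι]
    {μ : Measure α} {b ν : ι → ℝ} {K w : ι → α → ℝ} {A B : ℝ} (hA : 0 ≤ A)
    (hν : ∀ i, 0 < ν i) (hb : Summable fun i => ν i * b i ^ 2)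
    (hw_meas : ∀ i, Measurable (w i))
    (hw_int : ∀ i, ∫⁻ x, ENNReal.ofReal (w i x) ∂μ ≤ ENNReal.ofReal A)
    (hw_pos : ∀ᵐ x ∂μ, ∀ i, 0 < w i x) (hw_bdd : ∀ᵐ x ∂μ, ∃ M, ∀ i, w i x ≤ M)
    (hK : ∀ᵐ x ∂μ, Summable fun i => K i x ^ 2 / (ν i * w i x))
    (hKB : ∀ᵐ x ∂μ, ∑' i, K i x ^ 2 / (ν i * w i x) ≤ B) :
    ∫⁻ x, ENNReal.ofReal ((∑' i, b i * K i x) ^ 2) ∂μ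
      ≤ ENNReal.ofReal (A * B * ∑' i, ν i * b i ^ 2) := by
  have hb0 : ∀ i, 0 ≤ ν i * b i ^ 2 := fun i => by have := hν i; positivity
  have hpt : ∀ᵐ x ∂μ, ENNReal.ofReal ((∑' i, b i * K i x) ^ 2)
      ≤ ENNReal.ofReal B * ∑' i, ENNReal.ofReal (ν i * b i ^ 2) * ENNReal.ofReal (w i x) := by
    filter_upwards [hw_pos, hw_bdd, hK, hKB] with x hpos ⟨M, hM⟩ hKs hKx
    have hf_nonneg : ∀ i, 0 ≤ ν i * b i ^ 2 * w i x := fun i =>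
      mul_nonneg (hb0 i) (hpos i).le
    have hf : Summable fun i => ν i * b i ^ 2 * w i x :=
      (hb.mul_right M).of_nonneg_of_le hf_nonneg fun i => mul_le_mul_of_nonneg_left (hM i) (hb0 i)
    calc ENNReal.ofReal ((∑' i, b i * K i x) ^ 2)
        ≤ ENNReal.ofReal (B * ∑' i, ν i * b i ^ 2 * w i x) :=
          ENNReal.ofReal_le_ofReal (sq_tsum_mul_le_of_weight hν hpos hf hKs hKx)
      _ = _ := by
          rw [ENNReal.ofReal_mul' (tsum_nonneg hf_nonneg),
            ENNReal.ofReal_tsum_of_nonneg hf_nonneg hf]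
          exact congrArg _ (tsum_congr fun i => ENNReal.ofReal_mul (hb0 i))
  calc ∫⁻ x, ENNReal.ofReal ((∑' i, b i * K i x) ^ 2) ∂μ
      ≤ ∫⁻ x, ENNReal.ofReal B
          * ∑' i, ENNReal.ofReal (ν i * b i ^ 2) * ENNReal.ofReal (w i x) ∂μ :=
        lintegral_mono_ae hpt
    _ = ENNReal.ofReal B
          * ∑' i, ENNReal.ofReal (ν i * b i ^ 2) * ∫⁻ x, ENNReal.ofReal (w i x) ∂μ := by
        rw [lintegral_const_mul' _ _ ENNReal.ofReal_ne_top,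
          lintegral_tsum fun i => ((hw_meas i).ennreal_ofReal.const_mul _).aemeasurable]
        simp_rw [lintegral_const_mul' _ _ ENNReal.ofReal_ne_top]
    _ ≤ ENNReal.ofReal B * ∑' i, ENNReal.ofReal (ν i * b i ^ 2) * ENNReal.ofReal A := by
        gcongr with i
        exact hw_int i
    _ = ENNReal.ofReal (A * B * ∑' i, ν i * b i ^ 2) := by
        rw [ENNReal.tsum_mul_right, ← ENNReal.ofReal_tsum_of_nonneg hb0 hb,
          ← ENNReal.ofReal_mul (tsum_nonneg hb0),
          ← ENNReal.ofReal_mul' (mul_nonneg (tsum_nonneg hb0) hA)]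
        ring_nf

-- For `y > 0` this is `min 1 (x / y) ^ q`, but at `y = 0` it is `1` rather than the junk value
-- `0`, as the integral test on `[0, ∞)` requires.
lemma antitoneOn_div_max_rpow {q x : ℝ} (hq : 0 ≤ q) (hx : 0 < x) :
    AntitoneOn (fun y => (x / max x y) ^ q) (Ici 0) := fun a _ b _ hab =>
  rpow_le_rpow (by positivity) (div_le_div_of_nonneg_left hx.le (lt_max_of_lt_left hx)
    (max_le_max le_rfl hab)) hq

lemma integrableOn_and_integral_Ioi_div_max_rpow {q x : ℝ} (hq : 1 < q) (hx : 0 < x) :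
    IntegrableOn (fun y => (x / max x y) ^ q) (Ioi 0) ∧
      ∫ y in Ioi 0, (x / max x y) ^ q = q / (q - 1) * x := by
  have hhead : EqOn (fun y => (x / max x y) ^ q) (fun _ => 1) (Ioc 0 x) := fun y hy => by
    simp [max_eq_left hy.2, hx.ne']
  have htail : EqOn (fun y => (x / max x y) ^ q) (fun y => x ^ q * y ^ (-q)) (Ioi x) :=
    fun y hy => by
      have hy0 : 0 < y := hx.trans hy
      dsimp only
      rw [max_eq_right (le_of_lt hy), div_rpow hx.le hy0.le, rpow_neg hy0.le, div_eq_mul_inv]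
  have hi1 : IntegrableOn (fun y => (x / max x y) ^ q) (Ioc 0 x) :=
    (integrableOn_congr_fun hhead measurableSet_Ioc).2 (integrableOn_const measure_Ioc_lt_top.ne)
  have hi2 : IntegrableOn (fun y => (x / max x y) ^ q) (Ioi x) :=
    (integrableOn_congr_fun htail measurableSet_Ioi).2
      ((integrableOn_Ioi_rpow_of_lt (by linarith) hx).const_mul _)
  rw [← Ioc_union_Ioi_eq_Ioi hx.le]
  refine ⟨hi1.union hi2, ?_⟩
  rw [setIntegral_union Ioc_disjoint_Ioi_same measurableSet_Ioi hi1 hi2,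
    setIntegral_congr_fun measurableSet_Ioc hhead, setIntegral_congr_fun measurableSet_Ioi htail,
    integral_const_mul, integral_Ioi_rpow_of_lt (by linarith) hx]
  have hpow : x ^ q * x ^ (-q + 1) = x := by
    rw [← rpow_add hx]; simp
  have hq1 : q - 1 ≠ 0 := by linarith
  rw [setIntegral_const, Real.volume_real_Ioc_of_le hx.le, mul_div_assoc', mul_neg, hpow,
    smul_eq_mul, mul_one, sub_zero, show -q + 1 = -(q - 1) by ring, neg_div_neg_eq]
  field_simp
  ring

theorem summable_and_tsum_min_one_div_rpow_le {q x : ℝ} (hq : 1 < q) (hx : 0 < x) :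
    Summable (fun n : ℕ => min 1 (x / (n + 1)) ^ q) ∧
      ∑' n : ℕ, min 1 (x / (n + 1)) ^ q ≤ q / (q - 1) * x := by
  obtain ⟨hint, hval⟩ := integrableOn_and_integral_Ioi_div_max_rpow hq hx
  have hanti := antitoneOn_div_max_rpow (q := q) (by linarith) hx
  have hnonneg : ∀ y ∈ Ioi (0:ℝ), 0 ≤ (x / max x y) ^ q := fun y _ => by positivity
  have heq : ∀ n : ℕ, min 1 (x / (n + 1)) ^ q = (x / max x ((n + 1 : ℕ) : ℝ)) ^ q := by
    intro n
    have hn : (0:ℝ) < n + 1 := by positivity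
    push_cast
    rcases le_total x (n + 1) with h | h
    · rw [max_eq_right h, min_eq_right ((div_le_one hn).2 h)]
    · rw [max_eq_left h, min_eq_left ((one_le_div hn).2 h), div_self hx.ne']
  simp_rw [heq]
  exact ⟨(summable_nat_add_iff 1).2 (hanti.summable_of_integrableOn_Ioi_zero hint hnonneg),
    (hanti.tsum_add_one_le_integral hint hnonneg).trans hval.le⟩

-- After the substitution `ϱ = r²` this is the Cauchy density `2c / (1 + c²r²) dr`.
def sqrtCauchyWeight (c ϱ : ℝ) : ℝ := c / (√ϱ * (1 + c ^ 2 * ϱ))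

lemma sqrtCauchyWeight_pos {c ϱ : ℝ} (hc : 0 < c) (hϱ : 0 < ϱ) : 0 < sqrtCauchyWeight c ϱ := by
  unfold sqrtCauchyWeight; positivity

lemma sqrtCauchyWeight_le {c ϱ : ℝ} (hc : 0 < c) (hϱ : 0 < ϱ) :
    sqrtCauchyWeight c ϱ ≤ 1 / (2 * ϱ) := by
  have hs := sq_sqrt hϱ.le
  have hs0 := sqrt_pos.2 hϱ
  unfold sqrtCauchyWeight
  rw [div_le_div_iff₀ (by positivity) (by positivity)]
  nlinarith [sq_nonneg (c * √ϱ - 1)]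

lemma measurable_sqrtCauchyWeight (c : ℝ) : Measurable (sqrtCauchyWeight c) := by
  unfold sqrtCauchyWeight; fun_prop

lemma hasDerivAt_two_mul_arctan_mul_sqrt {c ϱ : ℝ} (hc : 0 < c) (hϱ : 0 < ϱ) :
    HasDerivAt (fun x => 2 * arctan (c * √x)) (sqrtCauchyWeight c ϱ) ϱ := by
  have h := (((hasDerivAt_sqrt hϱ.ne').const_mul c).arctan).const_mul 2
  refine h.congr_deriv ?_
  have hs := sq_sqrt hϱ.le
  have hs0 := sqrt_pos.2 hϱ
  unfold sqrtCauchyWeight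
  field_simp
  rw [hs]

lemma lintegral_sqrtCauchyWeight {c : ℝ} (hc : 0 < c) :
    ∫⁻ ϱ in Ioi 0, ENNReal.ofReal (sqrtCauchyWeight c ϱ) = ENNReal.ofReal π := by
  have hcont : ContinuousWithinAt (fun x => 2 * arctan (c * √x)) (Ici 0) 0 := by fun_prop
  have hderiv : ∀ ϱ ∈ Ioi (0:ℝ),
      HasDerivAt (fun x => 2 * arctan (c * √x)) (sqrtCauchyWeight c ϱ) ϱ :=
    fun _ hϱ => hasDerivAt_two_mul_arctan_mul_sqrt hc hϱ
  have hnonneg : ∀ ϱ ∈ Ioi (0:ℝ), 0 ≤ sqrtCauchyWeight c ϱ :=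
    fun _ hϱ => (sqrtCauchyWeight_pos hc hϱ).le
  have hlim : Tendsto (fun x => 2 * arctan (c * √x)) atTop (𝓝 π) := by
    have := (tendsto_arctan_atTop.mono_right nhdsWithin_le_nhds).comp
      (tendsto_sqrt_atTop.const_mul_atTop hc)
    simpa [mul_div_cancel₀] using this.const_mul 2
  rw [← ofReal_integral_eq_lintegral_ofReal
      (integrableOn_Ioi_deriv_of_nonneg hcont hderiv hnonneg hlim)
      ((ae_restrict_iff' measurableSet_Ioi).2 (.of_forall hnonneg)),
    integral_Ioi_of_hasDerivAt_of_nonneg hcont hderiv hnonneg hlim]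
  simp

lemma one_add_sq_div_one_add_pow_eight_sq_le {τ : ℝ} (hτ : 0 < τ) :
    (1 + τ ^ 2) / (1 + τ ^ 8) ^ 2 ≤ 2 / τ ^ 5 * min 1 (τ ^ 5) := by
  rcases le_total τ 1 with h | h
  · rw [min_eq_right (pow_le_one₀ hτ.le h), div_mul_cancel₀ _ (by positivity),
      div_le_iff₀ (by positivity)]
    nlinarith [pow_le_one₀ hτ.le h (n := 2), pow_nonneg hτ.le 8, pow_nonneg hτ.le 16]
  · rw [min_eq_left (one_le_pow₀ h), mul_one, div_le_div_iff₀ (by positivity) (by positivity)]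
    nlinarith [pow_le_pow_right₀ h (show 5 ≤ 7 by norm_num),
      pow_le_pow_right₀ h (show 7 ≤ 16 by norm_num), pow_nonneg hτ.le 8]

lemma sq_div_sqrtCauchyWeight_le {c ϱ : ℝ} (hc : 0 < c) (hϱ : 0 < ϱ) :
    (1 / (1 + (c ^ 2 * ϱ) ^ 4)) ^ 2 / sqrtCauchyWeight c ϱ
      ≤ 2 / (c ^ 6 * ϱ ^ 2) * min 1 (c ^ 4 * ϱ ^ 2) ^ ((5:ℝ) / 4) := by
  obtain ⟨s, hs, rfl⟩ : ∃ s, 0 < s ∧ ϱ = s ^ 2 := ⟨√ϱ, sqrt_pos.2 hϱ, (sq_sqrt hϱ.le).symm⟩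
  set τ := c * s
  have hτ : 0 < τ := mul_pos hc hs
  have hmin : min 1 (c ^ 4 * (s ^ 2) ^ 2) ^ ((5:ℝ) / 4) = min 1 (τ ^ 5) := by
    rw [show c ^ 4 * (s ^ 2) ^ 2 = τ ^ 4 by ring]
    rcases le_total τ 1 with h | h
    · rw [min_eq_right (pow_le_one₀ hτ.le h), min_eq_right (pow_le_one₀ hτ.le h),
        ← rpow_natCast, ← rpow_mul hτ.le]
      norm_num
    · rw [min_eq_left (one_le_pow₀ h), min_eq_left (one_le_pow₀ h), one_rpow]
  have hlhs : (1 / (1 + (c ^ 2 * s ^ 2) ^ 4)) ^ 2 / sqrtCauchyWeight c (s ^ 2)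
      = s / c * ((1 + τ ^ 2) / (1 + τ ^ 8) ^ 2) := by
    unfold sqrtCauchyWeight
    rw [sqrt_sq hs.le]
    field_simp
    ring
  have hrhs : 2 / (c ^ 6 * (s ^ 2) ^ 2) = s / c * (2 / τ ^ 5) := by
    field_simp
    ring
  rw [hlhs, hrhs, hmin, mul_assoc]
  gcongr
  exact one_add_sq_div_one_add_pow_eight_sq_le hτ

lemma kernel_sq_div_weight_le {γ p ϱ : ℝ} (hγ : 0 < γ) (hp : 0 < p) (hϱ : 0 < ϱ) :
    (p ^ 2 / (p ^ 2 + γ ^ 2 * ϱ ^ 4)) ^ 2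
        / (p ^ ((3:ℝ) / 2) * sqrtCauchyWeight ((γ / p) ^ ((1:ℝ) / 4)) ϱ)
      ≤ 2 / (γ ^ ((3:ℝ) / 2) * ϱ ^ 2) * min 1 (γ * ϱ ^ 2 / p) ^ ((5:ℝ) / 4) := by
  set c := (γ / p) ^ ((1:ℝ) / 4)
  have hγp : 0 < γ / p := div_pos hγ hp
  have hc : 0 < c := rpow_pos_of_pos hγp _
  have hc4 : c ^ 4 = γ / p := by
    rw [← rpow_natCast, ← rpow_mul hγp.le]; norm_num
  have hkernel : p ^ 2 / (p ^ 2 + γ ^ 2 * ϱ ^ 4) = 1 / (1 + (c ^ 2 * ϱ) ^ 4) := by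
    rw [show (c ^ 2 * ϱ) ^ 4 = (c ^ 4) ^ 2 * ϱ ^ 4 by ring, hc4]
    field_simp
  have hγ32 : γ ^ ((3:ℝ) / 2) = c ^ 6 * p ^ ((3:ℝ) / 2) := by
    rw [← rpow_natCast, ← rpow_mul hγp.le, div_rpow hγ.le hp.le]
    norm_num
    field_simp
  have hp32 : 0 < p ^ ((3:ℝ) / 2) := rpow_pos_of_pos hp _
  calc _ = ((1 / (1 + (c ^ 2 * ϱ) ^ 4)) ^ 2 / sqrtCauchyWeight c ϱ) / p ^ ((3:ℝ) / 2) := by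
        rw [hkernel, div_div, mul_comm (sqrtCauchyWeight c ϱ)]
    _ ≤ (2 / (c ^ 6 * ϱ ^ 2) * min 1 (c ^ 4 * ϱ ^ 2) ^ ((5:ℝ) / 4)) / p ^ ((3:ℝ) / 2) := by
        gcongr
        exact sq_div_sqrtCauchyWeight_le hc hϱ
    _ = _ := by
        rw [hγ32, hc4]
        field_simp

lemma summable_kernel_sq_div_weight {γ ϱ : ℝ} (hγ : 0 < γ) (hϱ : 0 < ϱ) :
    Summable fun ℓ : ℕ => ((π * (ℓ + 1)) ^ 2 / ((π * (ℓ + 1)) ^ 2 + γ ^ 2 * ϱ ^ 4)) ^ 2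
      / ((π * (ℓ + 1)) ^ ((3:ℝ) / 2) * sqrtCauchyWeight ((γ / (π * (ℓ + 1))) ^ ((1:ℝ) / 4)) ϱ) := by
  refine ((summable_and_tsum_min_one_div_rpow_le (q := 5 / 4) (by norm_num)
    (show 0 < γ * ϱ ^ 2 / π by positivity)).1.mul_left
      (2 / (γ ^ ((3:ℝ) / 2) * ϱ ^ 2))).of_nonneg_of_le (fun ℓ => ?_) fun ℓ => ?_
  · have := sqrtCauchyWeight_pos (c := (γ / (π * (ℓ + 1))) ^ ((1:ℝ) / 4)) (by positivity) hϱ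
    positivity
  · rw [div_div]
    exact kernel_sq_div_weight_le hγ (by positivity) hϱ

theorem tsum_kernel_sq_div_weight_le {γ ϱ : ℝ} (hγ : 0 < γ) (hϱ : 0 < ϱ) :
    ∑' ℓ : ℕ, ((π * (ℓ + 1)) ^ 2 / ((π * (ℓ + 1)) ^ 2 + γ ^ 2 * ϱ ^ 4)) ^ 2
      / ((π * (ℓ + 1)) ^ ((3:ℝ) / 2) * sqrtCauchyWeight ((γ / (π * (ℓ + 1))) ^ ((1:ℝ) / 4)) ϱ)
      ≤ 10 / (π * √γ) := by
  set x := γ * ϱ ^ 2 / π with hx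
  obtain ⟨hsum, hle⟩ := summable_and_tsum_min_one_div_rpow_le (q := 5 / 4) (by norm_num)
    (show 0 < x by positivity)
  calc _ ≤ ∑' ℓ : ℕ, 2 / (γ ^ ((3:ℝ) / 2) * ϱ ^ 2) * min 1 (x / (ℓ + 1)) ^ ((5:ℝ) / 4) :=
        (summable_kernel_sq_div_weight hγ hϱ).tsum_le_tsum (fun ℓ => by
          rw [div_div]; exact kernel_sq_div_weight_le hγ (by positivity) hϱ) (hsum.mul_left _)
    _ ≤ 2 / (γ ^ ((3:ℝ) / 2) * ϱ ^ 2) * (5 / 4 / (5 / 4 - 1) * x) := by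
        rw [tsum_mul_left]
        gcongr
    _ = 10 / (π * √γ) := by
        rw [show (3:ℝ) / 2 = 1 + 1 / 2 by norm_num, rpow_add hγ, rpow_one, ← sqrt_eq_rpow]
        have hsqrt := sqrt_pos.2 hγ
        rw [hx]
        field_simp
        ring

lemma cosB_succ_sq {v : ℝ} (hv : v = 0 ∨ v = 1) (ℓ : ℕ) : cosB (ℓ + 1) v ^ 2 = 2 := by
  have hcos : cos (π * ((ℓ + 1 : ℕ) : ℝ) * v) ^ 2 = 1 := by
    rcases hv with rfl | rfl
    · simp
    · rw [cos_sq', mul_one, mul_comm, sin_nat_mul_pi]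
      norm_num
  simp only [cosB, Nat.succ_ne_zero, if_false, mul_pow, sq_sqrt zero_le_two, hcos, mul_one]

/-- Uniform square-integrability in `ϱ` of the boundary functionals
`Φ_v(ϱ;φ)` for `φ ∈ H^{3/4}[0,1]`. -/
theorem boundary_functional_L2_bound (γ : ℝ) (hγ : 0 < γ) :
    ∃ C > (0:ℝ), ∀ φ : ℝ → ℝ, MemH (3/4) φ → ∀ v : ℝ, (v = 0 ∨ v = 1) →
      (∫⁻ ϱ in Set.Ioi (0:ℝ), ENNReal.ofReal
          ((∑' ℓ : ℕ, cosB (ℓ + 1) v * cosCoeff φ (ℓ + 1)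
              * (Real.pi * ((ℓ : ℝ) + 1)) ^ 2
              / ((Real.pi * ((ℓ : ℝ) + 1)) ^ 2 + γ ^ 2 * ϱ ^ 4)) ^ 2))
        ≤ ENNReal.ofReal
            (C * ∑' ℓ : ℕ, (Real.pi * ((ℓ : ℝ) + 1)) ^ ((3:ℝ)/2)
              * (cosCoeff φ (ℓ + 1)) ^ 2) := by
  refine ⟨π * (10 / (π * √γ)) * 2, by positivity, fun φ hφ v hv => ?_⟩
  have hcoeff : Summable fun ℓ : ℕ => (π * (ℓ + 1)) ^ ((3:ℝ) / 2) * cosCoeff φ (ℓ + 1) ^ 2 := by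
    simpa [show 2 * (3 / 4 : ℝ) = 3 / 2 by norm_num] using hφ.2
  have hsq : ∀ ℓ : ℕ, (π * (ℓ + 1)) ^ ((3:ℝ) / 2) * (cosB (ℓ + 1) v * cosCoeff φ (ℓ + 1)) ^ 2
      = 2 * ((π * (ℓ + 1)) ^ ((3:ℝ) / 2) * cosCoeff φ (ℓ + 1) ^ 2) := fun ℓ => by
    rw [mul_pow, cosB_succ_sq hv]; ring
  have hpos : ∀ᵐ ϱ : ℝ ∂volume.restrict (Ioi 0), 0 < ϱ := ae_restrict_mem measurableSet_Ioi
  have key := lintegral_sq_tsum_mul_le (μ := volume.restrict (Ioi (0:ℝ)))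
    (b := fun ℓ : ℕ => cosB (ℓ + 1) v * cosCoeff φ (ℓ + 1))
    (ν := fun ℓ : ℕ => (π * (ℓ + 1)) ^ ((3:ℝ) / 2))
    (K := fun ℓ ϱ => (π * (ℓ + 1)) ^ 2 / ((π * (ℓ + 1)) ^ 2 + γ ^ 2 * ϱ ^ 4))
    (w := fun ℓ => sqrtCauchyWeight ((γ / (π * (ℓ + 1))) ^ ((1:ℝ) / 4)))
    pi_pos.le (fun ℓ => by positivity) (by simpa only [hsq] using hcoeff.mul_left 2)
    (fun ℓ => measurable_sqrtCauchyWeight _)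
    (fun ℓ => (lintegral_sqrtCauchyWeight (by positivity)).le)
    (hpos.mono fun ϱ hϱ ℓ => sqrtCauchyWeight_pos (by positivity) hϱ)
    (hpos.mono fun ϱ hϱ => ⟨1 / (2 * ϱ), fun ℓ => sqrtCauchyWeight_le (by positivity) hϱ⟩)
    (hpos.mono fun ϱ hϱ => summable_kernel_sq_div_weight hγ hϱ)
    (hpos.mono fun ϱ hϱ => tsum_kernel_sq_div_weight_le hγ hϱ)
  simp only [mul_div_assoc]
  convert key using 2
  rw [tsum_congr hsq, tsum_mul_left]
  ring
end
end

section
/- There exists a constant C_K > 0 such that for every real sequence (a_ℓ)_{ℓ≥1} with finitely many nonzero entries: 0 ≤ (π/2^{3/2})·Σ_{v∈{0,1}} Σ_{ℓ,ℓ′≥1} 𝒦_v(ℓ,ℓ′)·a_ℓ·a_{ℓ′} ≤ C_K·Σ_{ℓ≥1}(πℓ)^{3/2} a_ℓ², where 𝒦_v(ℓ,ℓ′) := c_ℓ(v)·c_{ℓ′}(v)·(πℓ)^{1/2}(πℓ′)^{1/2}·(πℓ + πℓ′ + (π²ℓℓ′)^{1/2}) / ( ((πℓ)^{1/2} + (πℓ′)^{1/2})·(πℓ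 + πℓ′) ). -/
open MeasureTheory Real Filter

noncomputable section

/-- The kernel
`𝒦_v(ℓ,ℓ′) = c_ℓ(v) c_{ℓ′}(v) (πℓ)^{1/2} (πℓ′)^{1/2} (πℓ + πℓ′ + (π²ℓℓ′)^{1/2})
  / (((πℓ)^{1/2} + (πℓ′)^{1/2})(πℓ + πℓ′))`. -/
def Kker (v : ℝ) (ℓ ℓ' : ℕ) : ℝ :=
  cosB ℓ v * cosB ℓ' v * Real.sqrt (Real.pi * ℓ) * Real.sqrt (Real.pi * ℓ')
    * (Real.pi * ℓ + Real.pi * ℓ' + Real.sqrt (Real.pi ^ 2 * ℓ * ℓ'))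
    / ((Real.sqrt (Real.pi * ℓ) + Real.sqrt (Real.pi * ℓ')) * (Real.pi * ℓ + Real.pi * ℓ'))

/-- The quadratic form `(π/2^{3/2}) ∑_{v∈{0,1}} ∑_{ℓ,ℓ′≥1} 𝒦_v(ℓ,ℓ′) a_ℓ a_{ℓ′}`. -/
def Kform (a : ℕ → ℝ) : ℝ :=
  Real.pi / (2:ℝ) ^ ((3:ℝ)/2) *
    ((∑' q : ℕ × ℕ, Kker 0 (q.1 + 1) (q.2 + 1) * a (q.1 + 1) * a (q.2 + 1))
      + ∑' q : ℕ × ℕ, Kker 1 (q.1 + 1) (q.2 + 1) * a (q.1 + 1) * a (q.2 + 1))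

/-!
With `x = ℓ^{1/4}`, `x′ = ℓ′^{1/4}` the kernel is `√π c_ℓ(v) c_ℓ′(v) B(x², x′²)` where
`B(s,t) = st(s² + t² + st)/((s+t)(s² + t²)) = st/(s+t) + (st)²/((s² + t²)(s+t))`.
Since `1/(s+t) = ∫₀^∞ e^{-sx} e^{-tx} dx`, the Schur product of a positive semidefinite kernel with
a Cauchy kernel is again positive semidefinite, so each of the two `v`-terms is nonnegative.
For the upper bound, `|c_ℓ(v) c_ℓ′(v)| ≤ 2` and `B(s,t) ≤ (3/2) min(s,t)`; Schur's test with the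
weights `x⁻⁵` bounds the form of the kernel `min(x², x′²)` by `45 ∑ x⁶ a_ℓ²`, its row sums being
telescoped with `x_{ℓ+1}⁴ - x_ℓ⁴ = 1`.
-/

open Finset

section PosSemidefKernel

variable {ι : Type*}

def IsPosSemidefKernelOn (s : Finset ι) (K : ι → ι → ℝ) : Prop :=
  ∀ c : ι → ℝ, 0 ≤ ∑ i ∈ s, ∑ j ∈ s, c i * c j * K i j

namespace IsPosSemidefKernelOn

variable {s : Finset ι} {K L : ι → ι → ℝ}

theorem congr (hK : IsPosSemidefKernelOn s K) (h : ∀ i ∈ s, ∀ j ∈ s, K i j = L i j) :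
    IsPosSemidefKernelOn s L := fun c =>
  (hK c).trans_eq <| sum_congr rfl fun i hi => sum_congr rfl fun j hj => by rw [h i hi j hj]

theorem one (s : Finset ι) : IsPosSemidefKernelOn s fun _ _ => 1 := fun c => by
  simpa only [mul_one, ← sum_mul_sum, ← sq] using sq_nonneg (∑ i ∈ s, c i)

theorem add (hK : IsPosSemidefKernelOn s K) (hL : IsPosSemidefKernelOn s L) :
    IsPosSemidefKernelOn s fun i j => K i j + L i j := fun c => by
  simpa only [mul_add, sum_add_distrib] using add_nonneg (hK c) (hL c)

theorem mul_mul (hK : IsPosSemidefKernelOn s K) (d : ι → ℝ) :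
    IsPosSemidefKernelOn s fun i j => d i * d j * K i j := fun c => by
  convert hK fun i => c i * d i using 3 with i _ j _
  ring

theorem div_add (hK : IsPosSemidefKernelOn s K) {u : ι → ℝ} (hu : ∀ i ∈ s, 0 < u i) :
    IsPosSemidefKernelOn s fun i j => K i j / (u i + u j) := fun c => by
  set e : ι → ℝ → ℝ := fun i x => Real.exp (-(u i * x))
  have hexp : ∀ i j x, e i x * e j x = Real.exp (-(u i + u j) * x) := fun i j x => by
    rw [← Real.exp_add]; ring_nf
  have hint : ∀ i ∈ s, ∀ j ∈ s,
      ∫ x in Set.Ioi 0, c i * c j * K i j * (e i x * e j x)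
        = c i * c j * (K i j / (u i + u j)) := by
    intro i hi j hj
    have huij : 0 < u i + u j := add_pos (hu i hi) (hu j hj)
    simp only [hexp, integral_const_mul]
    rw [integral_exp_mul_Ioi (by linarith), mul_zero, Real.exp_zero]
    field_simp
  have hintegrable : ∀ i ∈ s, ∀ j ∈ s, IntegrableOn
      (fun x => c i * c j * K i j * (e i x * e j x)) (Set.Ioi 0) := by
    intro i hi j hj
    simp only [hexp]
    exact (exp_neg_integrableOn_Ioi 0 (add_pos (hu i hi) (hu j hj))).const_mul _
  calc (0 : ℝ) ≤ ∫ x in Set.Ioi 0, ∑ i ∈ s, ∑ j ∈ s, c i * c j * K i j * (e i x * e j x) :=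
        setIntegral_nonneg measurableSet_Ioi fun x _ => by
          convert hK fun i => c i * e i x using 3 with i _ j _
          ring
    _ = _ := by
        rw [integral_finsetSum _ fun i hi =>
          integrable_finsetSum _ fun j hj => hintegrable i hi j hj]
        refine sum_congr rfl fun i hi => ?_
        rw [integral_finsetSum _ fun j hj => hintegrable i hi j hj]
        exact sum_congr rfl fun j hj => hint i hi j hj

end IsPosSemidefKernelOn

end PosSemidefKernel

theorem sum_sum_mul_le_of_schur_test {ι : Type*} {s : Finset ι} {K : ι → ι → ℝ}
    (hK : ∀ i j, 0 ≤ K i j) (hK_symm : ∀ i j, K i j = K j i) {p w : ι → ℝ}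
    (hp : ∀ i ∈ s, 0 < p i) {C : ℝ} (hC : ∀ i ∈ s, ∑ j ∈ s, K i j * p j ≤ C * w i * p i)
    (y : ι → ℝ) :
    ∑ i ∈ s, ∑ j ∈ s, K i j * y i * y j ≤ C * ∑ i ∈ s, w i * y i ^ 2 := by
  set T : ι → ι → ℝ := fun i j => K i j * (y i ^ 2 * p j / p i)
  have hamgm : ∀ i ∈ s, ∀ j ∈ s, 2 * (K i j * y i * y j) ≤ T i j + T j i := by
    intro i hi j hj
    have hpi := hp i hi
    have hpj := hp j hj
    have : 2 * (y i * y j) ≤ y i ^ 2 * p j / p i + y j ^ 2 * p i / p j := by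
      rw [div_add_div _ _ hpi.ne' hpj.ne', le_div_iff₀ (by positivity)]
      nlinarith [sq_nonneg (y i * p j - y j * p i)]
    simp only [T, hK_symm j i]
    nlinarith [hK i j]
  have hsum : ∑ i ∈ s, ∑ j ∈ s, K i j * y i * y j ≤ ∑ i ∈ s, ∑ j ∈ s, T i j := by
    have h := sum_le_sum fun i hi => sum_le_sum fun j hj => hamgm i hi j hj
    simp only [← mul_sum, sum_add_distrib] at h
    rw [sum_comm (f := fun i j => T j i)] at h
    linarith
  calc ∑ i ∈ s, ∑ j ∈ s, K i j * y i * y j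
      ≤ ∑ i ∈ s, y i ^ 2 / p i * ∑ j ∈ s, K i j * p j := by
        refine hsum.trans_eq (sum_congr rfl fun i _ => ?_)
        rw [mul_sum]
        exact sum_congr rfl fun j _ => by ring
    _ ≤ ∑ i ∈ s, y i ^ 2 / p i * (C * w i * p i) :=
        sum_le_sum fun i hi =>
          mul_le_mul_of_nonneg_left (hC i hi) (div_nonneg (sq_nonneg _) (hp i hi).le)
    _ = C * ∑ i ∈ s, w i * y i ^ 2 := by
        rw [mul_sum]
        refine sum_congr rfl fun i hi => ?_
        field_simp [(hp i hi).ne']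

def fourthRootSucc (n : ℕ) : ℝ := √√((n : ℝ) + 1)

theorem fourthRootSucc_pow_four (n : ℕ) : fourthRootSucc n ^ 4 = n + 1 := by
  rw [fourthRootSucc, show 4 = 2 * 2 by rfl, pow_mul, Real.sq_sqrt (Real.sqrt_nonneg _),
    Real.sq_sqrt (by positivity)]

theorem one_le_fourthRootSucc (n : ℕ) : 1 ≤ fourthRootSucc n :=
  Real.one_le_sqrt.2 (Real.one_le_sqrt.2 (by simp))

theorem fourthRootSucc_pos (n : ℕ) : 0 < fourthRootSucc n :=
  one_pos.trans_le (one_le_fourthRootSucc n)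

theorem fourthRootSucc_le_succ (n : ℕ) : fourthRootSucc n ≤ fourthRootSucc (n + 1) :=
  Real.sqrt_le_sqrt (Real.sqrt_le_sqrt (by push_cast; linarith))

theorem fourthRootSucc_succ_le_two_mul (n : ℕ) : fourthRootSucc (n + 1) ≤ 2 * fourthRootSucc n := by
  have hy := one_le_fourthRootSucc n
  refine (pow_le_pow_iff_left₀ (fourthRootSucc_pos _).le (by linarith) four_ne_zero).1 ?_
  rw [mul_pow, fourthRootSucc_pow_four]
  push_cast
  linarith [fourthRootSucc_pow_four n, one_le_pow₀ (n := 4) hy]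

/-- From `x⁴ - y⁴ = 1` with `y ≤ x ≤ 2y`: `1 = (x - y)(x³ + x²y + xy² + y³) ≤ 15 (x - y) y³`. -/
theorem one_le_mul_sub_fourthRootSucc (n : ℕ) :
    1 ≤ 15 * (fourthRootSucc (n + 1) - fourthRootSucc n) * fourthRootSucc n ^ 3 := by
  set x := fourthRootSucc (n + 1)
  set y := fourthRootSucc n
  have hy : 1 ≤ y := one_le_fourthRootSucc n
  have hyx : y ≤ x := fourthRootSucc_le_succ n
  have h4 : x ^ 4 = y ^ 4 + 1 := by
    simp only [x, y, fourthRootSucc_pow_four]; push_cast; ring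
  have hx : x ≤ 2 * y := fourthRootSucc_succ_le_two_mul n
  have hfac : (x - y) * (x ^ 3 + x ^ 2 * y + x * y ^ 2 + y ^ 3) = 1 := by linear_combination h4
  have hx2 : x ^ 2 ≤ 4 * y ^ 2 := by nlinarith
  have hx3 : x ^ 3 ≤ 8 * y ^ 3 := by nlinarith
  nlinarith [mul_le_mul_of_nonneg_left
    (show x ^ 3 + x ^ 2 * y + x * y ^ 2 + y ^ 3 ≤ 15 * y ^ 3 by nlinarith) (sub_nonneg.2 hyx)]

theorem inv_pow_three_le_sub_fourthRootSucc (n : ℕ) :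
    (fourthRootSucc n ^ 3)⁻¹ ≤ 15 * (fourthRootSucc (n + 1) - fourthRootSucc n) := by
  have h := one_le_mul_sub_fourthRootSucc n
  have hy := fourthRootSucc_pos n
  rw [inv_le_iff_one_le_mul₀ (by positivity)]
  linarith

theorem inv_pow_five_le_sub_inv_fourthRootSucc (n : ℕ) :
    (fourthRootSucc n ^ 5)⁻¹ ≤ 30 * ((fourthRootSucc n)⁻¹ - (fourthRootSucc (n + 1))⁻¹) := by
  have h := one_le_mul_sub_fourthRootSucc n
  set x := fourthRootSucc (n + 1)
  set y := fourthRootSucc n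
  have hy : 0 < y := fourthRootSucc_pos n
  have hyx : y ≤ x := fourthRootSucc_le_succ n
  have hx : x ≤ 2 * y := fourthRootSucc_succ_le_two_mul n
  have hx0 : 0 < x := hy.trans_le hyx
  rw [inv_sub_inv hy.ne' hx0.ne', inv_le_iff_one_le_mul₀ (by positivity),
    mul_div_assoc', div_mul_eq_mul_div, le_div_iff₀ (by positivity)]
  nlinarith [mul_le_mul_of_nonneg_left h (by positivity : (0:ℝ) ≤ 2 * y ^ 2),
    mul_le_mul_of_nonneg_right hx hy.le]

theorem sum_range_inv_fourthRootSucc_pow_three_le (n : ℕ) :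
    ∑ k ∈ range n, (fourthRootSucc k ^ 3)⁻¹ ≤ 15 * fourthRootSucc n :=
  calc ∑ k ∈ range n, (fourthRootSucc k ^ 3)⁻¹
      ≤ ∑ k ∈ range n, 15 * (fourthRootSucc (k + 1) - fourthRootSucc k) :=
        sum_le_sum fun k _ => inv_pow_three_le_sub_fourthRootSucc k
    _ = 15 * (fourthRootSucc n - fourthRootSucc 0) := by rw [← mul_sum, sum_range_sub]
    _ ≤ 15 * fourthRootSucc n := by linarith [fourthRootSucc_pos 0]

theorem sum_Ico_inv_fourthRootSucc_pow_five_le {n N : ℕ} (h : n ≤ N) :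
    ∑ k ∈ Ico n N, (fourthRootSucc k ^ 5)⁻¹ ≤ 30 * (fourthRootSucc n)⁻¹ :=
  calc ∑ k ∈ Ico n N, (fourthRootSucc k ^ 5)⁻¹
      ≤ ∑ k ∈ Ico n N, 30 * ((fourthRootSucc k)⁻¹ - (fourthRootSucc (k + 1))⁻¹) :=
        sum_le_sum fun k _ => inv_pow_five_le_sub_inv_fourthRootSucc k
    _ = 30 * ((fourthRootSucc n)⁻¹ - (fourthRootSucc N)⁻¹) := by
        rw [← mul_sum, ← neg_sub_neg, ← sum_Ico_sub (fun k => -(fourthRootSucc k)⁻¹) h]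
        simp only [neg_sub_neg]
    _ ≤ 30 * (fourthRootSucc n)⁻¹ := by linarith [inv_pos.2 (fourthRootSucc_pos N)]

theorem sum_range_min_mul_inv_fourthRootSucc_pow_five_le {n N : ℕ} (h : n < N) :
    ∑ k ∈ range N, min (fourthRootSucc n ^ 2) (fourthRootSucc k ^ 2) * (fourthRootSucc k ^ 5)⁻¹
      ≤ 45 * fourthRootSucc n := by
  rw [← sum_range_add_sum_Ico _ h.le]
  have hlow : ∑ k ∈ range n,
      min (fourthRootSucc n ^ 2) (fourthRootSucc k ^ 2) * (fourthRootSucc k ^ 5)⁻¹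
        ≤ 15 * fourthRootSucc n := by
    refine (sum_le_sum fun k _ => ?_).trans (sum_range_inv_fourthRootSucc_pow_three_le n)
    have hk := fourthRootSucc_pos k
    calc min (fourthRootSucc n ^ 2) (fourthRootSucc k ^ 2) * (fourthRootSucc k ^ 5)⁻¹
        ≤ fourthRootSucc k ^ 2 * (fourthRootSucc k ^ 5)⁻¹ := by gcongr; exact min_le_right _ _
      _ = (fourthRootSucc k ^ 3)⁻¹ := by field_simp
  have hhigh : ∑ k ∈ Ico n N,
      min (fourthRootSucc n ^ 2) (fourthRootSucc k ^ 2) * (fourthRootSucc k ^ 5)⁻¹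
        ≤ 30 * fourthRootSucc n := by
    have hn := fourthRootSucc_pos n
    calc _ ≤ ∑ k ∈ Ico n N, fourthRootSucc n ^ 2 * (fourthRootSucc k ^ 5)⁻¹ := by
          gcongr with k
          · exact inv_nonneg.2 (pow_pos (fourthRootSucc_pos k) 5).le
          · exact min_le_left _ _
      _ ≤ fourthRootSucc n ^ 2 * (30 * (fourthRootSucc n)⁻¹) := by
          rw [← mul_sum]; gcongr; exact sum_Ico_inv_fourthRootSucc_pow_five_le h.le
      _ = 30 * fourthRootSucc n := by field_simp
  linarith

def KkerProfile (s t : ℝ) : ℝ :=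
  s * t * (s ^ 2 + t ^ 2 + s * t) / ((s + t) * (s ^ 2 + t ^ 2))

theorem KkerProfile_nonneg {s t : ℝ} (hs : 0 ≤ s) (ht : 0 ≤ t) : 0 ≤ KkerProfile s t := by
  unfold KkerProfile; positivity

theorem KkerProfile_le_min {s t : ℝ} (hs : 0 < s) (ht : 0 < t) :
    KkerProfile s t ≤ 3 / 2 * min s t := by
  rw [KkerProfile, div_le_iff₀ (by positivity)]
  rcases le_total s t with h | h
  · rw [min_eq_left h]
    nlinarith [mul_pos hs ht, mul_nonneg (mul_nonneg hs.le ht.le) (sub_nonneg.2 h)]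
  · rw [min_eq_right h]
    nlinarith [mul_pos hs ht, mul_nonneg (mul_nonneg hs.le ht.le) (sub_nonneg.2 h)]

theorem fourthRootSucc_sq (n : ℕ) : fourthRootSucc n ^ 2 = √((n : ℝ) + 1) :=
  Real.sq_sqrt (Real.sqrt_nonneg _)

theorem Kker_succ_eq (v : ℝ) (n k : ℕ) :
    Kker v (n + 1) (k + 1) = √π * (cosB (n + 1) v * cosB (k + 1) v *
      KkerProfile (fourthRootSucc n ^ 2) (fourthRootSucc k ^ 2)) := by
  have hsqrt : ∀ m : ℕ, √(π * ((m + 1 : ℕ) : ℝ)) = √π * fourthRootSucc m ^ 2 := fun m => by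
    rw [fourthRootSucc_sq, Real.sqrt_mul pi_pos.le]; push_cast; rfl
  have hcast : ∀ m : ℕ, π * ((m + 1 : ℕ) : ℝ) = √π ^ 2 * (fourthRootSucc m ^ 2) ^ 2 := fun m => by
    rw [Real.sq_sqrt pi_pos.le, ← pow_mul, fourthRootSucc_pow_four]; push_cast; rfl
  have hprod : √(π ^ 2 * ((n + 1 : ℕ) : ℝ) * ((k + 1 : ℕ) : ℝ))
      = √π * fourthRootSucc n ^ 2 * (√π * fourthRootSucc k ^ 2) := by
    rw [← hsqrt, ← hsqrt, ← Real.sqrt_mul (by positivity)]; ring_nf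
  have hpi : 0 < √π := Real.sqrt_pos.2 pi_pos
  have hn := fourthRootSucc_pos n
  have hk := fourthRootSucc_pos k
  rw [Kker, hsqrt, hsqrt, hprod, hcast, hcast, KkerProfile]
  field_simp

theorem isPosSemidefKernelOn_KkerProfile {ι : Type*} {s : Finset ι} {x : ι → ℝ}
    (hx : ∀ i ∈ s, 0 < x i) : IsPosSemidefKernelOn s fun i j => KkerProfile (x i) (x j) := by
  have hx2 : ∀ i ∈ s, 0 < x i ^ 2 := fun i hi => pow_pos (hx i hi) 2
  refine ((((IsPosSemidefKernelOn.one s).mul_mul x).div_add hx).add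
    ((((IsPosSemidefKernelOn.one s).div_add hx2).mul_mul fun i => x i ^ 2).div_add hx)).congr
    fun i hi j hj => ?_
  have := hx i hi
  have := hx j hj
  rw [KkerProfile]
  field_simp

theorem abs_cosB_le (ℓ : ℕ) (u : ℝ) : |cosB ℓ u| ≤ √2 := by
  unfold cosB
  split_ifs
  · rw [abs_one, Real.le_sqrt zero_le_one] <;> norm_num
  · rw [abs_mul, abs_of_nonneg (Real.sqrt_nonneg 2)]
    exact mul_le_of_le_one_right (Real.sqrt_nonneg 2) (abs_cos_le_one _)

theorem sum_sum_Kker_succ_mul_nonneg (v : ℝ) (s : Finset ℕ) (b : ℕ → ℝ) :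
    0 ≤ ∑ i ∈ s, ∑ j ∈ s, Kker v (i + 1) (j + 1) * b i * b j := by
  have h := isPosSemidefKernelOn_KkerProfile (s := s) (fun i _ => pow_pos (fourthRootSucc_pos i) 2)
    fun i => cosB (i + 1) v * b i
  have := mul_nonneg (Real.sqrt_nonneg π) h
  simp only [mul_sum] at this
  refine this.trans_eq (sum_congr rfl fun i _ => sum_congr rfl fun j _ => ?_)
  rw [Kker_succ_eq]
  ring

theorem Kker_succ_mul_le (v : ℝ) (n k : ℕ) (x y : ℝ) :
    Kker v (n + 1) (k + 1) * x * y
      ≤ 3 * √π * (min (fourthRootSucc n ^ 2) (fourthRootSucc k ^ 2) * |x| * |y|) := by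
  have hn := pow_pos (fourthRootSucc_pos n) 2
  have hk := pow_pos (fourthRootSucc_pos k) 2
  have hprofile := KkerProfile_nonneg hn.le hk.le
  have hcos : |cosB (n + 1) v * cosB (k + 1) v| ≤ 2 := by
    rw [abs_mul, ← Real.mul_self_sqrt zero_le_two]
    exact mul_le_mul (abs_cosB_le _ _) (abs_cosB_le _ _) (abs_nonneg _) (Real.sqrt_nonneg _)
  calc Kker v (n + 1) (k + 1) * x * y ≤ |Kker v (n + 1) (k + 1)| * |x| * |y| := by
        rw [← abs_mul, ← abs_mul]; exact le_abs_self _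
    _ ≤ √π * (2 * (3 / 2 * min (fourthRootSucc n ^ 2) (fourthRootSucc k ^ 2))) * |x| * |y| := by
        rw [Kker_succ_eq, abs_mul, abs_of_nonneg (Real.sqrt_nonneg _), abs_mul,
          abs_of_nonneg hprofile]
        gcongr
        exact KkerProfile_le_min hn hk
    _ = _ := by ring

theorem sum_sum_Kker_succ_mul_le (v : ℝ) (N : ℕ) (b : ℕ → ℝ) :
    ∑ i ∈ range N, ∑ j ∈ range N, Kker v (i + 1) (j + 1) * b i * b j
      ≤ 135 * √π * ∑ i ∈ range N, fourthRootSucc i ^ 6 * b i ^ 2 := by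
  have hschur := sum_sum_mul_le_of_schur_test (s := range N)
    (K := fun i j => min (fourthRootSucc i ^ 2) (fourthRootSucc j ^ 2))
    (fun i j => le_min (by positivity) (by positivity)) (fun i j => min_comm _ _)
    (p := fun i => (fourthRootSucc i ^ 5)⁻¹) (w := fun i => fourthRootSucc i ^ 6)
    (fun i _ => inv_pos.2 (pow_pos (fourthRootSucc_pos i) 5)) (C := 45)
    (fun i hi => by
      have := fourthRootSucc_pos i
      convert sum_range_min_mul_inv_fourthRootSucc_pow_five_le (mem_range.1 hi) using 1
      field_simp)
    fun i => |b i|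
  simp only [sq_abs] at hschur
  calc _ ≤ ∑ i ∈ range N, ∑ j ∈ range N, 3 * √π *
        (min (fourthRootSucc i ^ 2) (fourthRootSucc j ^ 2) * |b i| * |b j|) :=
        sum_le_sum fun i _ => sum_le_sum fun j _ => Kker_succ_mul_le v i j (b i) (b j)
    _ ≤ 3 * √π * (45 * ∑ i ∈ range N, fourthRootSucc i ^ 6 * b i ^ 2) := by
        simp only [← mul_sum]; gcongr
    _ = _ := by ring

theorem tsum_prod_mul_eq_sum_range {K : ℕ → ℕ → ℝ} {b : ℕ → ℝ} {N : ℕ}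
    (hb : ∀ n, N ≤ n → b n = 0) :
    ∑' q : ℕ × ℕ, K q.1 q.2 * b q.1 * b q.2 = ∑ i ∈ range N, ∑ j ∈ range N, K i j * b i * b j := by
  rw [tsum_eq_sum (s := range N ×ˢ range N), sum_product]
  intro q hq
  simp only [mem_product, mem_range, not_and_or, not_lt] at hq
  rcases hq with h | h <;> simp [hb _ h]

theorem pi_mul_succ_rpow_three_halves (n : ℕ) :
    (π * ((n : ℝ) + 1)) ^ ((3 : ℝ) / 2) = π * √π * fourthRootSucc n ^ 6 := by
  rw [show (3 : ℝ) / 2 = 1 + 1 / 2 by norm_num, Real.rpow_add (by positivity), Real.rpow_one,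
    ← Real.sqrt_eq_rpow, Real.sqrt_mul pi_pos.le, show 6 = 2 * 3 by rfl, pow_mul,
    fourthRootSucc_sq, pow_succ, Real.sq_sqrt (by positivity)]
  ring

/-- The quadratic form `ℰ_K` is nonnegative and bounded by the
`H^{3/4}` seminorm of the sequence. -/
theorem Kform_nonneg_and_bounded :
    ∃ C > (0:ℝ), ∀ a : ℕ → ℝ, (Function.support a).Finite →
      0 ≤ Kform a
      ∧ Kform a ≤ C * ∑' ℓ : ℕ, (Real.pi * ((ℓ : ℝ) + 1)) ^ ((3:ℝ)/2) * (a (ℓ + 1)) ^ 2 := by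
  refine ⟨270 / 2 ^ ((3 : ℝ) / 2), by positivity, fun a ha => ?_⟩
  obtain ⟨N, hN⟩ : ∃ N : ℕ, ∀ n, N ≤ n → a (n + 1) = 0 := by
    obtain ⟨M, hM⟩ := ha.bddAbove
    exact ⟨M, fun n hn => Function.notMem_support.1 fun h => by linarith [hM h]⟩
  have hform : ∀ v, ∑' q : ℕ × ℕ, Kker v (q.1 + 1) (q.2 + 1) * a (q.1 + 1) * a (q.2 + 1)
      = ∑ i ∈ range N, ∑ j ∈ range N, Kker v (i + 1) (j + 1) * a (i + 1) * a (j + 1) :=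
    fun v => tsum_prod_mul_eq_sum_range (K := fun i j => Kker v (i + 1) (j + 1)) hN
  have hweight : ∑' ℓ : ℕ, (π * ((ℓ : ℝ) + 1)) ^ ((3 : ℝ) / 2) * a (ℓ + 1) ^ 2
      = π * √π * ∑ i ∈ range N, fourthRootSucc i ^ 6 * a (i + 1) ^ 2 := by
    rw [tsum_eq_sum fun n hn => by simp [hN n (not_lt.1 (mem_range.not.1 hn))], mul_sum]
    exact sum_congr rfl fun n _ => by rw [pi_mul_succ_rpow_three_halves]; ring
  rw [Kform, hform, hform, hweight]
  have h0 := sum_sum_Kker_succ_mul_le 0 N fun n => a (n + 1)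
  have h1 := sum_sum_Kker_succ_mul_le 1 N fun n => a (n + 1)
  refine ⟨mul_nonneg (by positivity) (add_nonneg (sum_sum_Kker_succ_mul_nonneg _ _ _)
    (sum_sum_Kker_succ_mul_nonneg _ _ _)), ?_⟩
  calc _ ≤ π / 2 ^ ((3 : ℝ) / 2) *
        (2 * (135 * √π * ∑ i ∈ range N, fourthRootSucc i ^ 6 * a (i + 1) ^ 2)) := by
        gcongr; linarith
    _ = _ := by ring
end
end

section
/- Let α, β > 0 satisfy α + 2β = 1. Then there exists a constant C > 0 such that for every f ∈ L²(0,∞): the double integral ∬_{(0,∞)²} |f(x)|·|f(y)| / ((x^α + y^α)·x^β·y^β) dx dy is finite, and 0 ≤ ∬_{(0,∞)²} f(x)·f(y) / ((x^α + y^α)·x^β·y^β) dx dy ≤ C·∫₀^∞ f(x)² dx. -/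
/-!
The kernel `K(x, y) = ((x^α + y^α) x^β y^β)⁻¹` is positive, symmetric and, since `α + 2β = 1`,
homogeneous of degree `-1`. The bound is Schur's test with the weight `x^(-1/2)`: the substitution
`y = x t` gives `∫ K(x, y) y^(-1/2) dy = C x^(-1/2)` with `C = ∫₀^∞ t^(-β-1/2) / (1 + t^α) dt`,
which converges because `-1 < -β - 1/2 < α - 1`. Nonnegativity comes from the Laplace
representation `1 / (x^α + y^α) = ∫₀^∞ e^(-(x^α + y^α) s) ds`, which writes the form as
`∫₀^∞ (∫₀^∞ f(x) x^(-β) e^(-x^α s) dx)² ds`.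
-/

open MeasureTheory Real Set
open scoped ENNReal

lemma abs_mul_abs_le_half_add (a b : ℝ) {u v : ℝ} (hu : 0 < u) (hv : 0 < v) :
    |a| * |b| ≤ (a ^ 2 / u * v + b ^ 2 / v * u) / 2 := by
  rw [div_mul_eq_mul_div, div_mul_eq_mul_div, div_add_div _ _ hu.ne' hv.ne', le_div_iff₀ two_pos,
    le_div_iff₀ (mul_pos hu hv)]
  have key := sq_nonneg (|a| * v - |b| * u)
  rw [sub_sq, mul_pow, mul_pow, sq_abs, sq_abs] at key
  linarith

section SchurTest

variable {X : Type*} [MeasurableSpace X] {μ : Measure X} [SFinite μ]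

theorem lintegral_schur_test {K : X × X → ℝ} {h f : X → ℝ} {C : ℝ≥0∞}
    (hK : Measurable K) (hK_symm : ∀ p, K p.swap = K p) (hh : Measurable h)
    (hh_pos : ∀ᵐ x ∂μ, 0 < h x)
    (hKh : ∀ᵐ x ∂μ, ∫⁻ y, ENNReal.ofReal (K (x, y) * h y) ∂μ ≤ C * ENNReal.ofReal (h x))
    (hf : AEMeasurable f μ) :
    ∫⁻ p, ENNReal.ofReal (|f p.1| * |f p.2| * K p) ∂μ.prod μ
      ≤ C * ∫⁻ x, ENNReal.ofReal (f x ^ 2) ∂μ := by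
  set A : X × X → ℝ≥0∞ := fun p => ENNReal.ofReal (f p.1 ^ 2 / h p.1 * (K p * h p.2)) with hA
  have hA_meas : AEMeasurable A (μ.prod μ) := by fun_prop
  -- The two halves of the AM-GM bound are mirror images under `Prod.swap`.
  have h_amgm : ∀ᵐ p ∂μ.prod μ,
      ENNReal.ofReal (|f p.1| * |f p.2| * K p) ≤ 2⁻¹ * A p + 2⁻¹ * A p.swap := by
    filter_upwards [Measure.quasiMeasurePreserving_fst.ae hh_pos,
      Measure.quasiMeasurePreserving_snd.ae hh_pos] with p h1 h2
    rcases lt_or_ge (K p) 0 with hKp | hKp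
    · rw [ENNReal.ofReal_of_nonpos (mul_nonpos_of_nonneg_of_nonpos (by positivity) hKp.le)]
      exact zero_le
    · simp only [hA, Prod.fst_swap, Prod.snd_swap, hK_symm]
      rw [← ENNReal.ofReal_ofNat 2, ← ENNReal.ofReal_inv_of_pos two_pos,
        ← ENNReal.ofReal_mul (by norm_num), ← ENNReal.ofReal_mul (by norm_num),
        ← ENNReal.ofReal_add (by positivity) (by positivity)]
      refine ENNReal.ofReal_le_ofReal ?_
      have h_amgm_real :=
        mul_le_mul_of_nonneg_right (abs_mul_abs_le_half_add (f p.1) (f p.2) h1 h2) hKp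
      linarith
  have h_inner : ∀ᵐ x ∂μ, ∫⁻ y, A (x, y) ∂μ ≤ C * ENNReal.ofReal (f x ^ 2) := by
    filter_upwards [hh_pos, hKh] with x hx hKx
    calc ∫⁻ y, A (x, y) ∂μ
        = ENNReal.ofReal (f x ^ 2 / h x) * ∫⁻ y, ENNReal.ofReal (K (x, y) * h y) ∂μ := by
          simp only [hA, ENNReal.ofReal_mul (div_nonneg (sq_nonneg (f x)) hx.le)]
          exact lintegral_const_mul' _ _ ENNReal.ofReal_ne_top
      _ ≤ ENNReal.ofReal (f x ^ 2 / h x) * (C * ENNReal.ofReal (h x)) := by gcongr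
      _ = C * ENNReal.ofReal (f x ^ 2) := by
          rw [mul_left_comm, ← ENNReal.ofReal_mul (by positivity), div_mul_cancel₀ _ hx.ne']
  calc ∫⁻ p, ENNReal.ofReal (|f p.1| * |f p.2| * K p) ∂μ.prod μ
      ≤ ∫⁻ p, (2⁻¹ * A p + 2⁻¹ * A p.swap) ∂μ.prod μ := lintegral_mono_ae h_amgm
    _ = ∫⁻ p, A p ∂μ.prod μ := by
        rw [lintegral_add_left' (hA_meas.const_mul _), lintegral_const_mul' _ _ (by simp),
          lintegral_const_mul' _ _ (by simp), lintegral_prod_swap A, ← add_mul,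
          ENNReal.inv_two_add_inv_two, one_mul]
    _ = ∫⁻ x, ∫⁻ y, A (x, y) ∂μ ∂μ := lintegral_prod A hA_meas
    _ ≤ ∫⁻ x, C * ENNReal.ofReal (f x ^ 2) ∂μ := lintegral_mono_ae h_inner
    _ = C * ∫⁻ x, ENNReal.ofReal (f x ^ 2) ∂μ := by
        rw [lintegral_const_mul'' _ (by fun_prop)]

end SchurTest

theorem integrable_and_integral_le_of_lintegral_le {X : Type*} [MeasurableSpace X]
    {μ : Measure X} {f : X → ℝ} (hf : AEStronglyMeasurable f μ) (hf_nonneg : 0 ≤ᵐ[μ] f)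
    {c : ℝ} (hc : 0 ≤ c)
    (h : ∫⁻ x, ENNReal.ofReal (f x) ∂μ ≤ ENNReal.ofReal c) :
    Integrable f μ ∧ ∫ x, f x ∂μ ≤ c :=
  ⟨⟨hf, (hasFiniteIntegral_iff_ofReal hf_nonneg).2 (h.trans_lt ENNReal.ofReal_lt_top)⟩, by
    rw [integral_eq_lintegral_of_nonneg_ae hf_nonneg hf]
    exact ENNReal.toReal_le_of_le_ofReal hc h⟩

theorem integral_mul_mul_integral_mul_nonneg {X S : Type*} [MeasurableSpace X]
    [MeasurableSpace S] {μ : Measure X} {ν : Measure S} [SFinite μ] [SFinite ν]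
    {g : X → ℝ} {φ : X → S → ℝ} (hg : AEMeasurable g μ) (hφ : Measurable (Function.uncurry φ))
    (hφ_int : ∀ᵐ p ∂μ.prod μ, Integrable (fun s => φ p.1 s * φ p.2 s) ν)
    (h_abs : Integrable (fun p => |g p.1| * |g p.2| * ∫ s, |φ p.1 s * φ p.2 s| ∂ν) (μ.prod μ)) :
    0 ≤ ∫ p, g p.1 * g p.2 * ∫ s, φ p.1 s * φ p.2 s ∂ν ∂μ.prod μ := by
  set F : X × X → S → ℝ := fun p s => g p.1 * g p.2 * (φ p.1 s * φ p.2 s) with hF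
  have hF_meas : AEMeasurable (Function.uncurry F) ((μ.prod μ).prod ν) := by
    have hφφ : AEMeasurable (fun q : (X × X) × S => φ q.1.1 q.2 * φ q.1.2 q.2)
        ((μ.prod μ).prod ν) := by
      fun_prop
    simp only [hF, Function.uncurry_def]
    fun_prop
  have hF_int : Integrable (Function.uncurry F) ((μ.prod μ).prod ν) := by
    refine (integrable_prod_iff hF_meas.aestronglyMeasurable).2 ⟨?_, h_abs.congr ?_⟩
    · filter_upwards [hφ_int] with p hp using hp.const_mul (g p.1 * g p.2)
    · refine ae_of_all _ fun p => ?_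
      simp only [hF, Function.uncurry_apply_pair, Real.norm_eq_abs, abs_mul, integral_const_mul]
  calc (0 : ℝ) ≤ ∫ s, (∫ x, g x * φ x s ∂μ) ^ 2 ∂ν := integral_nonneg fun s => sq_nonneg _
    _ = ∫ s, ∫ p, F p s ∂μ.prod μ ∂ν := by
        congr 1 with s
        rw [sq, ← integral_prod_mul]
        congr 1 with p
        ring
    _ = ∫ p, ∫ s, F p s ∂ν ∂μ.prod μ := (integral_integral_swap hF_int).symm
    _ = ∫ p, g p.1 * g p.2 * ∫ s, φ p.1 s * φ p.2 s ∂ν ∂μ.prod μ := by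
        simp only [hF, integral_const_mul]

theorem lintegral_Ioi_comp_mul_left {F : ℝ → ℝ≥0∞} (hF : Measurable F) {c : ℝ} (hc : 0 < c) :
    ∫⁻ t in Ioi 0, F (c * t) = ENNReal.ofReal c⁻¹ * ∫⁻ y in Ioi 0, F y := by
  have h_preimage : (c * ·) ⁻¹' Ioi 0 = Ioi 0 := by rw [preimage_const_mul_Ioi₀ 0 hc, zero_div]
  have h_map : Measure.map (c * ·) (volume.restrict (Ioi 0)) =
      ENNReal.ofReal c⁻¹ • volume.restrict (Ioi (0 : ℝ)) := by
    rw [← h_preimage, ← Measure.restrict_map (measurable_const_mul c) measurableSet_Ioi,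
      Real.map_volume_mul_left hc.ne', Measure.restrict_smul, abs_inv, abs_of_pos hc,
      h_preimage]
  rw [← lintegral_map hF (measurable_const_mul c), h_map, lintegral_smul_measure, smul_eq_mul]

theorem integrableOn_Ioi_rpow_div_one_add_rpow {a b : ℝ} (ha : -1 < a)
    (hab : a - b < -1) : IntegrableOn (fun t : ℝ => t ^ a / (1 + t ^ b)) (Ioi 0) := by
  have h_meas : AEStronglyMeasurable (fun t : ℝ => t ^ a / (1 + t ^ b)) volume :=
    (by fun_prop : Measurable fun t : ℝ => t ^ a / (1 + t ^ b)).aestronglyMeasurable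
  have h_zero : IntegrableOn (fun t : ℝ => t ^ a / (1 + t ^ b)) (Ioc 0 1) := by
    refine Integrable.mono' (((intervalIntegral.integrableOn_Ioo_rpow_iff one_pos).2
      ha).congr_set_ae Ioo_ae_eq_Ioc.symm) h_meas.restrict ?_
    filter_upwards [ae_restrict_mem measurableSet_Ioc] with t ht
    have ht0 : 0 < t := ht.1
    rw [norm_of_nonneg (by positivity)]
    exact div_le_self (by positivity) (le_add_of_nonneg_right (by positivity))
  have h_infty : IntegrableOn (fun t : ℝ => t ^ a / (1 + t ^ b)) (Ioi 1) := by
    refine Integrable.mono' ((integrableOn_Ioi_rpow_iff one_pos).2 hab) h_meas.restrict ?_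
    filter_upwards [ae_restrict_mem measurableSet_Ioi] with t (ht : 1 < t)
    have ht0 : 0 < t := one_pos.trans ht
    rw [norm_of_nonneg (by positivity), rpow_sub ht0]
    exact div_le_div_of_nonneg_left (by positivity) (by positivity)
      (le_add_of_nonneg_left zero_le_one)
  simpa only [Ioc_union_Ioi_eq_Ioi zero_le_one] using h_zero.union h_infty

theorem lintegral_Ioi_mul_rpow_neg_half_of_homogeneous {K : ℝ × ℝ → ℝ} (hK : Measurable K)
    (hK_hom : ∀ x > 0, ∀ t > 0, K (x, x * t) = x⁻¹ * K (1, t)) {x : ℝ} (hx : 0 < x) :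
    ∫⁻ y in Ioi 0, ENNReal.ofReal (K (x, y) * y ^ (-(2 : ℝ)⁻¹)) =
      (∫⁻ t in Ioi 0, ENNReal.ofReal (K (1, t) * t ^ (-(2 : ℝ)⁻¹))) *
        ENNReal.ofReal (x ^ (-(2 : ℝ)⁻¹)) := by
  have h_scaled : ∀ t > 0, K (x, x * t) * (x * t) ^ (-(2 : ℝ)⁻¹) =
      x⁻¹ * x ^ (-(2 : ℝ)⁻¹) * (K (1, t) * t ^ (-(2 : ℝ)⁻¹)) := fun t ht => by
    rw [hK_hom x hx t ht, mul_rpow hx.le ht.le]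
    ring
  have hx_cancel : ENNReal.ofReal x * ENNReal.ofReal x⁻¹ = 1 := by
    rw [← ENNReal.ofReal_mul hx.le, mul_inv_cancel₀ hx.ne', ENNReal.ofReal_one]
  calc ∫⁻ y in Ioi 0, ENNReal.ofReal (K (x, y) * y ^ (-(2 : ℝ)⁻¹))
      = ENNReal.ofReal x * ∫⁻ t in Ioi 0,
          ENNReal.ofReal (K (x, x * t) * (x * t) ^ (-(2 : ℝ)⁻¹)) := by
        rw [lintegral_Ioi_comp_mul_left (F := fun y => ENNReal.ofReal (K (x, y) * y ^ (-(2 : ℝ)⁻¹)))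
          (by fun_prop) hx, ← mul_assoc, hx_cancel, one_mul]
    _ = ENNReal.ofReal x * ∫⁻ t in Ioi 0, ENNReal.ofReal (x⁻¹ * x ^ (-(2 : ℝ)⁻¹)) *
          ENNReal.ofReal (K (1, t) * t ^ (-(2 : ℝ)⁻¹)) := by
        refine congrArg _ (setLIntegral_congr_fun measurableSet_Ioi fun t ht => ?_)
        rw [h_scaled t ht, ENNReal.ofReal_mul (by positivity)]
    _ = _ := by
        rw [lintegral_const_mul' _ _ ENNReal.ofReal_ne_top, ← mul_assoc,
          ← ENNReal.ofReal_mul hx.le, ← mul_assoc, mul_inv_cancel₀ hx.ne', one_mul, mul_comm]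

theorem volume_restrict_Ioi_prod_Ioi :
    volume.restrict (Ioi (0 : ℝ) ×ˢ Ioi (0 : ℝ)) =
      (volume.restrict (Ioi 0)).prod (volume.restrict (Ioi 0)) := by
  rw [Measure.prod_restrict, ← Measure.volume_eq_prod]

noncomputable def hardyKernel (α β : ℝ) (p : ℝ × ℝ) : ℝ :=
  ((p.1 ^ α + p.2 ^ α) * p.1 ^ β * p.2 ^ β)⁻¹

section HardyKernel

variable {α β : ℝ}

@[fun_prop]
theorem measurable_hardyKernel : Measurable (hardyKernel α β) := by
  unfold hardyKernel
  fun_prop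

theorem hardyKernel_swap (p : ℝ × ℝ) : hardyKernel α β p.swap = hardyKernel α β p := by
  simp only [hardyKernel, Prod.fst_swap, Prod.snd_swap]
  ring

theorem hardyKernel_pos {x y : ℝ} (hx : 0 < x) (hy : 0 < y) : 0 < hardyKernel α β (x, y) := by
  unfold hardyKernel
  positivity

theorem hardyKernel_mul_right (hαβ : α + 2 * β = 1) {x t : ℝ} (hx : 0 < x) (ht : 0 < t) :
    hardyKernel α β (x, x * t) = x⁻¹ * hardyKernel α β (1, t) := by
  have hx_pow : x ^ α * x ^ β * x ^ β = x := by
    rw [← rpow_add hx, ← rpow_add hx, show α + β + β = 1 by linarith, rpow_one]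
  simp only [hardyKernel, mul_rpow hx.le ht.le, one_rpow, ← mul_inv]
  congr 1
  linear_combination (1 + t ^ α) * t ^ β * hx_pow

theorem hardyKernel_one_mul_rpow_neg_half {t : ℝ} (ht : 0 < t) :
    hardyKernel α β (1, t) * t ^ (-(2 : ℝ)⁻¹) = t ^ (-β - 2⁻¹) / (1 + t ^ α) := by
  rw [hardyKernel, one_rpow, one_rpow, sub_eq_add_neg, rpow_add ht, rpow_neg ht.le β]
  field_simp

theorem rpow_mul_exp_mul_rpow_mul_exp {x y : ℝ} (s : ℝ) :
    x ^ (-β) * exp (-(x ^ α * s)) * (y ^ (-β) * exp (-(y ^ α * s))) =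
      x ^ (-β) * y ^ (-β) * exp (-(x ^ α + y ^ α) * s) := by
  rw [mul_mul_mul_comm, ← exp_add]
  ring_nf

theorem integrableOn_exp_mul_exp {x y : ℝ} (hx : 0 < x) (hy : 0 < y) :
    IntegrableOn (fun s => x ^ (-β) * exp (-(x ^ α * s)) * (y ^ (-β) * exp (-(y ^ α * s))))
      (Ioi 0) := by
  simp only [rpow_mul_exp_mul_rpow_mul_exp]
  exact (exp_neg_integrableOn_Ioi 0 (by positivity)).const_mul _

theorem hardyKernel_eq_integral_exp {x y : ℝ} (hx : 0 < x) (hy : 0 < y) :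
    hardyKernel α β (x, y) =
      ∫ s in Ioi 0, x ^ (-β) * exp (-(x ^ α * s)) * (y ^ (-β) * exp (-(y ^ α * s))) := by
  have hc : 0 < x ^ α + y ^ α := by positivity
  simp only [rpow_mul_exp_mul_rpow_mul_exp]
  rw [integral_const_mul, integral_exp_mul_Ioi (neg_neg_of_pos hc), mul_zero, exp_zero,
    hardyKernel, rpow_neg hx.le, rpow_neg hy.le]
  field_simp

noncomputable def hardyConstant (α β : ℝ) : ℝ≥0∞ :=
  ∫⁻ t in Ioi 0, ENNReal.ofReal (hardyKernel α β (1, t) * t ^ (-(2 : ℝ)⁻¹))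

theorem hardyConstant_ne_top (hα : 0 < α) (hαβ : α + 2 * β = 1) : hardyConstant α β ≠ ⊤ := by
  have h_int : IntegrableOn (fun t => hardyKernel α β (1, t) * t ^ (-(2 : ℝ)⁻¹)) (Ioi 0) :=
    (integrableOn_Ioi_rpow_div_one_add_rpow (a := -β - 2⁻¹) (b := α) (by linarith)
      (by linarith)).congr_fun (fun t ht => (hardyKernel_one_mul_rpow_neg_half ht).symm)
      measurableSet_Ioi
  exact h_int.lintegral_lt_top.ne

theorem hardyConstant_ne_zero : hardyConstant α β ≠ 0 := by
  refine ((setLIntegral_pos_iff (by fun_prop)).2 ?_).ne'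
  have h_support : Ioi 0 ⊆ Function.support
      (fun t => ENNReal.ofReal (hardyKernel α β (1, t) * t ^ (-(2 : ℝ)⁻¹))) ∩ Ioi 0 :=
    fun t (ht : 0 < t) => ⟨(ENNReal.ofReal_pos.2 (mul_pos (hardyKernel_pos one_pos ht)
      (rpow_pos_of_pos ht _))).ne', ht⟩
  exact (measure_mono h_support).trans_lt' (by simp)

theorem lintegral_abs_mul_abs_mul_hardyKernel_le (hαβ : α + 2 * β = 1) {f : ℝ → ℝ}
    (hf : AEMeasurable f (volume.restrict (Ioi 0))) :
    ∫⁻ p in Ioi 0 ×ˢ Ioi 0, ENNReal.ofReal (|f p.1| * |f p.2| * hardyKernel α β p) ≤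
      hardyConstant α β * ∫⁻ x in Ioi 0, ENNReal.ofReal (f x ^ 2) := by
  rw [volume_restrict_Ioi_prod_Ioi]
  refine lintegral_schur_test measurable_hardyKernel hardyKernel_swap
    (h := fun y => y ^ (-(2 : ℝ)⁻¹)) (by fun_prop) ?_ ?_ hf
  · filter_upwards [ae_restrict_mem measurableSet_Ioi] with x (hx : 0 < x)
    exact rpow_pos_of_pos hx _
  · filter_upwards [ae_restrict_mem measurableSet_Ioi] with x (hx : 0 < x)
    exact (lintegral_Ioi_mul_rpow_neg_half_of_homogeneous measurable_hardyKernel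
      (fun x hx t ht => hardyKernel_mul_right hαβ hx ht) hx).le

theorem integrableOn_abs_mul_abs_mul_hardyKernel_and_le (hα : 0 < α) (hαβ : α + 2 * β = 1)
    {f : ℝ → ℝ} (hf : MemLp f 2 (volume.restrict (Ioi 0))) :
    IntegrableOn (fun p => |f p.1| * |f p.2| * hardyKernel α β p) (Ioi 0 ×ˢ Ioi 0) ∧
      ∫ p in Ioi 0 ×ˢ Ioi 0, |f p.1| * |f p.2| * hardyKernel α β p ≤
        (hardyConstant α β).toReal * ∫ x in Ioi 0, f x ^ 2 := by
  have hf_meas : AEMeasurable f (volume.restrict (Ioi 0)) := hf.aestronglyMeasurable.aemeasurable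
  refine integrable_and_integral_le_of_lintegral_le ?_ ?_
    (mul_nonneg ENNReal.toReal_nonneg (integral_nonneg fun x => sq_nonneg (f x))) ?_
  · rw [volume_restrict_Ioi_prod_Ioi]
    exact (by fun_prop : AEMeasurable (fun p : ℝ × ℝ => |f p.1| * |f p.2| * hardyKernel α β p)
      _).aestronglyMeasurable
  · filter_upwards [ae_restrict_mem (measurableSet_Ioi.prod measurableSet_Ioi)] with p hp
    exact mul_nonneg (by positivity) (hardyKernel_pos hp.1 hp.2).le
  · calc ∫⁻ p in Ioi 0 ×ˢ Ioi 0, ENNReal.ofReal (|f p.1| * |f p.2| * hardyKernel α β p)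
        ≤ hardyConstant α β * ∫⁻ x in Ioi 0, ENNReal.ofReal (f x ^ 2) :=
          lintegral_abs_mul_abs_mul_hardyKernel_le hαβ hf_meas
      _ = ENNReal.ofReal ((hardyConstant α β).toReal * ∫ x in Ioi 0, f x ^ 2) := by
          rw [← ofReal_integral_eq_lintegral_ofReal hf.integrable_sq
              (ae_of_all _ fun x => sq_nonneg (f x)), ENNReal.ofReal_mul ENNReal.toReal_nonneg,
            ENNReal.ofReal_toReal (hardyConstant_ne_top hα hαβ)]

theorem setIntegral_mul_mul_hardyKernel_nonneg {f : ℝ → ℝ}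
    (hf : AEMeasurable f (volume.restrict (Ioi 0)))
    (h_abs : IntegrableOn (fun p => |f p.1| * |f p.2| * hardyKernel α β p) (Ioi 0 ×ˢ Ioi 0)) :
    0 ≤ ∫ p in Ioi 0 ×ˢ Ioi 0, f p.1 * f p.2 * hardyKernel α β p := by
  have h_pos : ∀ᵐ p ∂volume.restrict (Ioi (0 : ℝ) ×ˢ Ioi (0 : ℝ)), 0 < p.1 ∧ 0 < p.2 :=
    ae_restrict_mem (measurableSet_Ioi.prod measurableSet_Ioi)
  have h_laplace : ∀ᵐ p ∂volume.restrict (Ioi (0 : ℝ) ×ˢ Ioi (0 : ℝ)),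
      f p.1 * f p.2 * hardyKernel α β p = f p.1 * f p.2 * ∫ s in Ioi 0,
        p.1 ^ (-β) * exp (-(p.1 ^ α * s)) * (p.2 ^ (-β) * exp (-(p.2 ^ α * s))) := by
    filter_upwards [h_pos] with p hp
    rw [← hardyKernel_eq_integral_exp hp.1 hp.2]
  rw [integral_congr_ae h_laplace]
  rw [IntegrableOn, volume_restrict_Ioi_prod_Ioi] at h_abs
  rw [volume_restrict_Ioi_prod_Ioi] at h_pos ⊢
  refine integral_mul_mul_integral_mul_nonneg hf
    (φ := fun x s => x ^ (-β) * exp (-(x ^ α * s))) (by fun_prop) ?_ (h_abs.congr ?_)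
  · filter_upwards [h_pos] with p hp using integrableOn_exp_mul_exp hp.1 hp.2
  · filter_upwards [h_pos] with p ⟨hx, hy⟩
    rw [hardyKernel_eq_integral_exp hx hy]
    refine congrArg _ (integral_congr_ae (ae_of_all _ fun s => (abs_of_pos ?_).symm))
    positivity

end HardyKernel

theorem hardy_type_bound_general (α β : ℝ) (hα : 0 < α) (hαβ : α + 2 * β = 1) :
    ∃ C > (0:ℝ), ∀ f : ℝ → ℝ, MemLp f 2 (volume.restrict (Set.Ioi (0:ℝ))) →
      IntegrableOn (fun p : ℝ × ℝ =>
          |f p.1| * |f p.2| / ((p.1 ^ α + p.2 ^ α) * p.1 ^ β * p.2 ^ β))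
        (Set.Ioi (0:ℝ) ×ˢ Set.Ioi (0:ℝ))
      ∧ 0 ≤ (∫ p in Set.Ioi (0:ℝ) ×ˢ Set.Ioi (0:ℝ),
          f p.1 * f p.2 / ((p.1 ^ α + p.2 ^ α) * p.1 ^ β * p.2 ^ β))
      ∧ (∫ p in Set.Ioi (0:ℝ) ×ˢ Set.Ioi (0:ℝ),
          f p.1 * f p.2 / ((p.1 ^ α + p.2 ^ α) * p.1 ^ β * p.2 ^ β))
        ≤ C * ∫ x in Set.Ioi (0:ℝ), (f x) ^ 2 := by
  refine ⟨(hardyConstant α β).toReal,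
    ENNReal.toReal_pos hardyConstant_ne_zero (hardyConstant_ne_top hα hαβ), fun f hf => ?_⟩
  obtain ⟨h_abs_int, h_abs_le⟩ := integrableOn_abs_mul_abs_mul_hardyKernel_and_le hα hαβ hf
  have hf_meas : AEMeasurable f (volume.restrict (Ioi 0)) := hf.aestronglyMeasurable.aemeasurable
  have h_int : IntegrableOn (fun p => f p.1 * f p.2 * hardyKernel α β p) (Ioi 0 ×ˢ Ioi 0) := by
    refine Integrable.mono h_abs_int ?_
      (ae_of_all _ fun p => by simp only [norm_mul, Real.norm_eq_abs, abs_abs, le_refl])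
    rw [volume_restrict_Ioi_prod_Ioi]
    exact (by fun_prop : AEMeasurable (fun p : ℝ × ℝ => f p.1 * f p.2 * hardyKernel α β p)
      _).aestronglyMeasurable
  refine ⟨h_abs_int, setIntegral_mul_mul_hardyKernel_nonneg hf_meas h_abs_int,
    (setIntegral_mono_on h_int h_abs_int (measurableSet_Ioi.prod measurableSet_Ioi)
      fun p hp => ?_).trans h_abs_le⟩
  rw [← abs_mul]
  exact mul_le_mul_of_nonneg_right (le_abs_self _) (hardyKernel_pos hp.1 hp.2).le

/-- A Hardy-type bound: for `α, β > 0` with `α + 2β = 1`, the bilinear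
form with kernel `1/((x^α + y^α) x^β y^β)` is nonnegative and bounded on `L²(0,∞)`. -/
theorem hardy_type_bound (α β : ℝ) (hα : 0 < α) (hβ : 0 < β) (hαβ : α + 2 * β = 1) :
    ∃ C > (0:ℝ), ∀ f : ℝ → ℝ, MemLp f 2 (volume.restrict (Set.Ioi (0:ℝ))) →
      IntegrableOn (fun p : ℝ × ℝ =>
          |f p.1| * |f p.2| / ((p.1 ^ α + p.2 ^ α) * p.1 ^ β * p.2 ^ β))
        (Set.Ioi (0:ℝ) ×ˢ Set.Ioi (0:ℝ))
      ∧ 0 ≤ (∫ p in Set.Ioi (0:ℝ) ×ˢ Set.Ioi (0:ℝ),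
          f p.1 * f p.2 / ((p.1 ^ α + p.2 ^ α) * p.1 ^ β * p.2 ^ β))
      ∧ (∫ p in Set.Ioi (0:ℝ) ×ˢ Set.Ioi (0:ℝ),
          f p.1 * f p.2 / ((p.1 ^ α + p.2 ^ α) * p.1 ^ β * p.2 ^ β))
        ≤ C * ∫ x in Set.Ioi (0:ℝ), (f x) ^ 2 :=
  hardy_type_bound_general α β hα hαβ
end

section
/- Let n ≥ 0 be an integer, let a_0, …, a_n be real numbers, and let ℓ ∈ ℤ be not divisible by 2(n+1) (so that sin(πk_ℓ/2) ≠ 0, where k_ℓ = ℓ/(n+1)). Then 2·Σ_{y=0}^n a_y·cos(πℓ u_y) = a_0 + (−1)^{ℓ+1}·a_n − Σ_{y=1}^n [ sin(πk_ℓ(y − 1/2)) / sin(πk_ℓ/2) ]·(a_y − a_{y−1}), where u_y = y/(n+1). -/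
/-!
Multiplying the cosine sum by `sin (θ / 2)` with `θ = π ℓ / (n + 1)` turns each term into a
difference `sin (θ (y + 1/2)) - sin (θ (y - 1/2))`, so Abel summation leaves two boundary terms and
the sum against the increments of `a`. The boundary terms are `a 0 sin (θ / 2)` and
`a n sin (ℓπ - θ / 2) = (-1)^(ℓ+1) a n sin (θ / 2)`, and `sin (θ / 2) ≠ 0` exactly when
`2 (n + 1) ∤ ℓ`.
-/

open Real Finset

theorem sum_range_mul_sub_by_parts {R : Type*} [CommRing R] (a T : ℕ → R) (n : ℕ) :
    ∑ y ∈ range (n + 1), a y * (T (y + 1) - T y)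
      = a n * T (n + 1) - a 0 * T 0 - ∑ y ∈ Icc 1 n, T y * (a y - a (y - 1)) := by
  induction n with
  | zero => simp [mul_sub]
  | succ n ih =>
    rw [sum_range_succ, ih, sum_Icc_succ_top (by omega), Nat.add_sub_cancel]
    ring

theorem two_mul_sin_half_mul_cos (θ y : ℝ) :
    2 * sin (θ / 2) * cos (θ * y) = sin (θ * (y + 1 / 2)) - sin (θ * (y - 1 / 2)) := by
  rw [two_mul_sin_mul_cos, sub_eq_add_neg _ (sin _), ← sin_neg]
  ring_nf

theorem two_mul_sum_mul_cos_by_parts (a : ℕ → ℝ) (n : ℕ) {θ : ℝ} (hθ : sin (θ / 2) ≠ 0) :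
    2 * ∑ y ∈ range (n + 1), a y * cos (θ * y)
      = a 0 + sin (θ * (n + 1 / 2)) / sin (θ / 2) * a n
        - ∑ y ∈ Icc 1 n, sin (θ * (y - 1 / 2)) / sin (θ / 2) * (a y - a (y - 1)) := by
  have hterm (y : ℕ) : 2 * (a y * cos (θ * y)) * sin (θ / 2)
      = a y * (sin (θ * ((y + 1 : ℕ) - 1 / 2)) - sin (θ * (y - 1 / 2))) := by
    calc 2 * (a y * cos (θ * y)) * sin (θ / 2) = a y * (2 * sin (θ / 2) * cos (θ * y)) := by ring
      _ = _ := by rw [two_mul_sin_half_mul_cos]; push_cast; ring_nf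
  have hT0 : sin (θ * ((0 : ℕ) - 1 / 2)) = -sin (θ / 2) := by
    rw [← sin_neg]; ring_nf
  have hTn : sin (θ * ((n + 1 : ℕ) - 1 / 2)) = sin (θ * (n + 1 / 2)) := by
    push_cast; ring_nf
  have hparts := sum_range_mul_sub_by_parts a (fun y : ℕ ↦ sin (θ * (y - 1 / 2))) n
  refine mul_right_cancel₀ hθ ?_
  rw [mul_sum, sum_mul, sum_congr rfl fun y _ ↦ hterm y, hparts, hT0, hTn,
    sub_mul, add_mul, sum_mul]
  field_simp
  ring

theorem sin_pi_mul_int_div_ne_zero {ℓ m : ℤ} (hm : m ≠ 0) (h : ¬ m ∣ ℓ) : sin (π * ℓ / m) ≠ 0 := by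
  rw [Ne, sin_eq_zero_iff]
  rintro ⟨k, hk⟩
  refine h ⟨k, ?_⟩
  have hm' : (m : ℝ) ≠ 0 := by exact_mod_cast hm
  field_simp at hk
  exact_mod_cast (by linarith : (ℓ : ℝ) = m * k)

theorem sin_pi_mul_int_sub (ℓ : ℤ) (x : ℝ) : sin (π * ℓ - x) = (-1) ^ (ℓ + 1) * sin x := by
  rw [mul_comm, sin_int_mul_pi_sub, zpow_add_one₀ (by norm_num)]
  ring

/-- Abel-type summation formula for cosine sums on the half-integer
grid: for `ℓ` not divisible by `2(n+1)`,
`2 ∑_{y=0}^n a_y cos(πℓ u_y) = a_0 + (−1)^{ℓ+1} a_n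
  − ∑_{y=1}^n [sin(πk_ℓ(y−1/2))/sin(πk_ℓ/2)] (a_y − a_{y−1})`. -/
theorem cosine_sum_by_parts (n : ℕ) (a : ℕ → ℝ) (ℓ : ℤ)
    (hℓ : ¬ ((2 * ((n : ℤ) + 1)) ∣ ℓ)) :
    2 * ∑ y ∈ Finset.range (n + 1),
        a y * Real.cos (Real.pi * (ℓ : ℝ) * ((y : ℝ) / ((n : ℝ) + 1)))
      = a 0 + (-1 : ℝ) ^ (ℓ + 1) * a n
        - ∑ y ∈ Finset.Icc 1 n,
            (Real.sin (Real.pi * ((ℓ : ℝ) / ((n : ℝ) + 1)) * ((y : ℝ) - 1/2))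
              / Real.sin (Real.pi * ((ℓ : ℝ) / ((n : ℝ) + 1)) / 2))
              * (a y - a (y - 1)) := by
  set θ := π * ((ℓ : ℝ) / ((n : ℝ) + 1))
  have hhalf : θ / 2 = π * ℓ / ((2 * ((n : ℤ) + 1) : ℤ) : ℝ) := by
    simp only [θ]; push_cast; field_simp
  have hθ : sin (θ / 2) ≠ 0 := hhalf ▸ sin_pi_mul_int_div_ne_zero (by omega) hℓ
  have hend : sin (θ * (n + 1 / 2)) / sin (θ / 2) = (-1) ^ (ℓ + 1) := by
    have : θ * (n + 1 / 2) = π * ℓ - θ / 2 := by simp only [θ]; field_simp; ring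
    rw [this, sin_pi_mul_int_sub, mul_div_cancel_right₀ _ hθ]
  have hcos (y : ℕ) : π * ℓ * (y / ((n : ℝ) + 1)) = θ * y := by simp only [θ]; ring
  simp only [hcos]
  rw [two_mul_sum_mul_cos_by_parts a n hθ, hend]
end
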